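/- For every θ ∈ [0,1], the linear map A_θ : γ(θ)^⊥ → ℝ² given by A_θ(q) = (q·(θ,1,0), q·(0,θ/2,1)), where γ(θ) = (1, −θ, θ²/2)/‖(1, −θ, θ²/2)‖, is invertible, and both A_θ and its inverse are Lipschitz with constant at most 100 (with respect to the Euclidean norms), uniformly in θ ∈ [0,1]. -/

import Mathlib

/-!
On `γ(θ)^⊥` the first coordinate is determined by the other two, `q₀ = θq₁ - (θ²/2)q₂`,
so `A_θ` becomes a `2 × 2` system in `(q₁, q₂)` with determinant `(1 + θ²/2)² ≥ 1`.
Cramer's rule gives an explicit inverse whose coefficients, like those of `A_θ`, are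
bounded for `|θ| ≤ 1`; the Lipschitz bounds then follow from linearity and Cauchy–Schwarz.
-/

/-- The map `A_θ : q ↦ (θq₁ + q₂, (θ/2)q₂ + q₃)`. -/
noncomputable def Amap (θ : ℝ) (q : EuclideanSpace ℝ (Fin 3)) : EuclideanSpace ℝ (Fin 2) :=
  WithLp.toLp 2 ![θ * q 0 + q 1, (θ / 2) * q 1 + q 2]

theorem sq_mul_add_mul_le (a b x y : ℝ) :
    (a * x + b * y) ^ 2 ≤ (a ^ 2 + b ^ 2) * (x ^ 2 + y ^ 2) := by
  nlinarith [sq_nonneg (a * y - b * x)]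

theorem EuclideanSpace.norm_sq_fin_two (x : EuclideanSpace ℝ (Fin 2)) :
    ‖x‖ ^ 2 = x 0 ^ 2 + x 1 ^ 2 := by
  rw [EuclideanSpace.real_norm_sq_eq, Fin.sum_univ_two]

theorem EuclideanSpace.norm_sq_fin_three (x : EuclideanSpace ℝ (Fin 3)) :
    ‖x‖ ^ 2 = x 0 ^ 2 + x 1 ^ 2 + x 2 ^ 2 := by
  rw [EuclideanSpace.real_norm_sq_eq, Fin.sum_univ_three]

theorem norm_le_mul_of_sq_le {E F : Type*} [SeminormedAddCommGroup E] [SeminormedAddCommGroup F]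
    {x : E} {y : F} {C : ℝ} (hC : 0 ≤ C) (h : ‖x‖ ^ 2 ≤ C ^ 2 * ‖y‖ ^ 2) : ‖x‖ ≤ C * ‖y‖ := by
  rw [← mul_pow] at h
  exact (pow_le_pow_iff_left₀ (norm_nonneg x) (by positivity) two_ne_zero).mp h

/-- `γ(θ)^⊥`, written with the unnormalised vector `(1, -θ, θ²/2)`. -/
def gammaPerp (θ : ℝ) : Submodule ℝ (EuclideanSpace ℝ (Fin 3)) where
  carrier := {q | q 0 * 1 + q 1 * (-θ) + q 2 * (θ ^ 2 / 2) = 0}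
  add_mem' {q q'} hq hq' := by
    simp only [Set.mem_ofPred_eq, PiLp.add_apply] at *; linear_combination hq + hq'
  zero_mem' := by simp
  smul_mem' c q hq := by
    simp only [Set.mem_ofPred_eq, PiLp.smul_apply, smul_eq_mul] at *; linear_combination c * hq

noncomputable def AmapInv (θ : ℝ) (w : EuclideanSpace ℝ (Fin 2)) : EuclideanSpace ℝ (Fin 3) :=
  let D := (1 + θ ^ 2 / 2) ^ 2
  let q₁ := (w 0 + θ ^ 3 / 2 * w 1) / D
  let q₂ := ((1 + θ ^ 2) * w 1 - θ / 2 * w 0) / D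
  WithLp.toLp 2 ![θ * q₁ - θ ^ 2 / 2 * q₂, q₁, q₂]

theorem Amap_sub (θ : ℝ) (q q' : EuclideanSpace ℝ (Fin 3)) :
    Amap θ (q - q') = Amap θ q - Amap θ q' := by
  ext i; fin_cases i <;>
    simp only [Amap, PiLp.sub_apply, Fin.zero_eta, Fin.mk_one, Matrix.cons_val_zero,
      Matrix.cons_val_one, Matrix.cons_val_fin_one] <;> ring

theorem AmapInv_mem_gammaPerp (θ : ℝ) (w : EuclideanSpace ℝ (Fin 2)) :
    AmapInv θ w ∈ gammaPerp θ := by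
  show _ = _
  simp only [AmapInv, Matrix.cons_val_zero, Matrix.cons_val_one, Matrix.cons_val]
  ring

theorem Amap_AmapInv (θ : ℝ) (w : EuclideanSpace ℝ (Fin 2)) : Amap θ (AmapInv θ w) = w := by
  have hD : (1 + θ ^ 2 / 2) ^ 2 ≠ 0 := by positivity
  ext i; fin_cases i <;>
    simp only [Amap, AmapInv, Fin.zero_eta, Fin.mk_one, Matrix.cons_val_zero, Matrix.cons_val_one,
      Matrix.cons_val_fin_one, Matrix.cons_val] <;> field_simp <;> ring

theorem AmapInv_Amap {θ : ℝ} {q : EuclideanSpace ℝ (Fin 3)} (hq : q ∈ gammaPerp θ) :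
    AmapInv θ (Amap θ q) = q := by
  have hD : (1 + θ ^ 2 / 2) ^ 2 ≠ 0 := by positivity
  have h₀ : q 0 = θ * q 1 - θ ^ 2 / 2 * q 2 := by
    change _ = _ at hq; linear_combination hq
  ext i; fin_cases i <;>
    simp only [Amap, AmapInv, h₀, Fin.zero_eta, Fin.mk_one, Fin.reduceFinMk, Matrix.cons_val_zero,
      Matrix.cons_val_one, Matrix.cons_val_fin_one, Matrix.cons_val] <;> field_simp <;> ring

theorem norm_Amap_le {θ : ℝ} (hθ : θ ^ 2 ≤ 1) (q : EuclideanSpace ℝ (Fin 3)) :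
    ‖Amap θ q‖ ≤ 2 * ‖q‖ := by
  refine norm_le_mul_of_sq_le zero_le_two ?_
  calc ‖Amap θ q‖ ^ 2 = (θ * q 0 + 1 * q 1) ^ 2 + (θ / 2 * q 1 + 1 * q 2) ^ 2 := by
        simp [EuclideanSpace.norm_sq_fin_two, Amap]
    _ ≤ (θ ^ 2 + 1 ^ 2) * (q 0 ^ 2 + q 1 ^ 2) + ((θ / 2) ^ 2 + 1 ^ 2) * (q 1 ^ 2 + q 2 ^ 2) :=
        add_le_add (sq_mul_add_mul_le ..) (sq_mul_add_mul_le ..)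
    _ ≤ 2 ^ 2 * ‖q‖ ^ 2 := by
        rw [EuclideanSpace.norm_sq_fin_three]
        nlinarith [sq_nonneg (q 0), sq_nonneg (q 1), sq_nonneg (q 2)]

theorem norm_AmapInv_le {θ : ℝ} (hθ : θ ^ 2 ≤ 1) (w : EuclideanSpace ℝ (Fin 2)) :
    ‖AmapInv θ w‖ ≤ 5 * ‖w‖ := by
  have hD : 1 ≤ (1 + θ ^ 2 / 2) ^ 2 := one_le_pow₀ (by nlinarith)
  have hw := EuclideanSpace.norm_sq_fin_two w
  set q₁ := (w 0 + θ ^ 3 / 2 * w 1) / (1 + θ ^ 2 / 2) ^ 2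
  set q₂ := ((1 + θ ^ 2) * w 1 - θ / 2 * w 0) / (1 + θ ^ 2 / 2) ^ 2
  have h₁ : q₁ ^ 2 ≤ 2 * ‖w‖ ^ 2 :=
    calc q₁ ^ 2 ≤ (1 * w 0 + θ ^ 3 / 2 * w 1) ^ 2 := by
          rw [div_pow, one_mul]; exact div_le_self (sq_nonneg _) (one_le_pow₀ hD)
      _ ≤ (1 ^ 2 + (θ ^ 3 / 2) ^ 2) * ‖w‖ ^ 2 := hw ▸ sq_mul_add_mul_le ..
      _ ≤ 2 * ‖w‖ ^ 2 := by gcongr; nlinarith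
  have h₂ : q₂ ^ 2 ≤ 5 * ‖w‖ ^ 2 :=
    calc q₂ ^ 2 ≤ (-(θ / 2) * w 0 + (1 + θ ^ 2) * w 1) ^ 2 := by
          rw [div_pow, neg_mul, neg_add_eq_sub]
          exact div_le_self (sq_nonneg _) (one_le_pow₀ hD)
      _ ≤ ((-(θ / 2)) ^ 2 + (1 + θ ^ 2) ^ 2) * ‖w‖ ^ 2 := hw ▸ sq_mul_add_mul_le ..
      _ ≤ 5 * ‖w‖ ^ 2 := by gcongr; nlinarith
  have h₀ : (θ * q₁ - θ ^ 2 / 2 * q₂) ^ 2 ≤ 14 * ‖w‖ ^ 2 :=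
    calc _ = (θ * q₁ + -(θ ^ 2 / 2) * q₂) ^ 2 := by ring
      _ ≤ (θ ^ 2 + (-(θ ^ 2 / 2)) ^ 2) * (q₁ ^ 2 + q₂ ^ 2) := sq_mul_add_mul_le ..
      _ ≤ 2 * (7 * ‖w‖ ^ 2) := by gcongr <;> nlinarith
      _ = 14 * ‖w‖ ^ 2 := by ring
  change ‖(WithLp.toLp 2 ![θ * q₁ - θ ^ 2 / 2 * q₂, q₁, q₂] : EuclideanSpace ℝ (Fin 3))‖ ≤ _
  refine norm_le_mul_of_sq_le (by norm_num) ?_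
  rw [EuclideanSpace.norm_sq_fin_three]
  change (θ * q₁ - θ ^ 2 / 2 * q₂) ^ 2 + q₁ ^ 2 + q₂ ^ 2 ≤ 5 ^ 2 * ‖w‖ ^ 2
  linarith [sq_nonneg ‖w‖]

/-- For every `θ ∈ [0,1]`, the restriction of `A_θ` to `γ(θ)^⊥`
(the plane `q₁ - θq₂ + (θ²/2)q₃ = 0`) is a bijection onto `ℝ²`, and both it and its
inverse are `100`-Lipschitz, uniformly in `θ`. -/
theorem stmt15 (θ : ℝ) (hθ : θ ∈ Set.Icc (0 : ℝ) 1) :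
    (∀ q q' : EuclideanSpace ℝ (Fin 3),
      q 0 * 1 + q 1 * (-θ) + q 2 * (θ ^ 2 / 2) = 0 →
      q' 0 * 1 + q' 1 * (-θ) + q' 2 * (θ ^ 2 / 2) = 0 →
      dist (Amap θ q) (Amap θ q') ≤ 100 * dist q q' ∧
      dist q q' ≤ 100 * dist (Amap θ q) (Amap θ q')) ∧
    (∀ w : EuclideanSpace ℝ (Fin 2), ∃! q : EuclideanSpace ℝ (Fin 3),
      q 0 * 1 + q 1 * (-θ) + q 2 * (θ ^ 2 / 2) = 0 ∧ Amap θ q = w) := by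
  have hθ₂ : θ ^ 2 ≤ 1 := by nlinarith [hθ.1, hθ.2]
  refine ⟨fun q q' hq hq' ↦ ?_, fun w ↦ ?_⟩
  · have hsub : q - q' ∈ gammaPerp θ := sub_mem hq hq'
    simp only [dist_eq_norm, ← Amap_sub]
    constructor
    · linarith [norm_Amap_le hθ₂ (q - q'), norm_nonneg (q - q')]
    · calc ‖q - q'‖ = ‖AmapInv θ (Amap θ (q - q'))‖ := by rw [AmapInv_Amap hsub]
        _ ≤ 5 * ‖Amap θ (q - q')‖ := norm_AmapInv_le hθ₂ _
        _ ≤ 100 * ‖Amap θ (q - q')‖ := by linarith [norm_nonneg (Amap θ (q - q'))]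
  · refine ⟨AmapInv θ w, ⟨AmapInv_mem_gammaPerp θ w, Amap_AmapInv θ w⟩, ?_⟩
    rintro q ⟨hq, rfl⟩
    exact (AmapInv_Amap hq).symm
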